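/- Let A, B be strictly positive bounded operators with m·1 ≤ B ≤ M·1 for 0 < m < M and log A ≤ log B (chaotic order). Then for p ≤ 0 and -1 ≤ r ≤ 0: B^p ≤ B^(-r)·exp( ((M·1-B)/(M-m))·ln m^(p+r) + ((B-m·1)/(M-m))·ln M^(p+r) ) ≤ K(m,M,p+r)·A^p, where K(m,M,s) = (m M^s - M m^s)/((s-1)(M-m))·( ((s-1)/s)·(M^s - m^s)/(m M^s - M m^s) )^s. -/

import Mathlib

/-!
On `[m, M]` the geometric interpolation of `t ^ s` (`s = p + r ≤ 0`) between the endpoints lies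
above `t ^ s` (concavity of `log`) and below the chord (weighted AM-GM); this gives the first
inequality. For the second, `t ^ (-r)` times the chord is bounded on all of `(0, ∞)` by
`c + d log t` with `d ≤ 0`, the tangent of `K t ^ p` in the variable `log t` at the point where
the chord divided by `t ^ s` is maximal. Since `d ≤ 0`, the chaotic order `log A ≤ log B` gives
`c + d log B ≤ c + d log A`, and the tangent lies below `K A ^ p`.
-/

open Real

noncomputable def linInterp (m M a b t : ℝ) : ℝ := (M - t) / (M - m) * a + (t - m) / (M - m) * b

noncomputable def geomInterp (m M a b t : ℝ) : ℝ :=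
  exp ((M - t) / (M - m) * log a + (t - m) / (M - m) * log b)

section Interpolation

variable {m M t : ℝ}

lemma interp_weights_nonneg (hmt : m ≤ t) (htM : t ≤ M) :
    0 ≤ (M - t) / (M - m) ∧ 0 ≤ (t - m) / (M - m) :=
  ⟨div_nonneg (by linarith) (by linarith), div_nonneg (by linarith) (by linarith)⟩

lemma interp_weights_sum (hmM : m < M) : (M - t) / (M - m) + (t - m) / (M - m) = 1 := by
  rw [← add_div, div_eq_one_iff_eq (by linarith)]
  ring

lemma geomInterp_le_linInterp {a b : ℝ} (ha : 0 < a) (hb : 0 < b) (hmt : m ≤ t) (htM : t ≤ M)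
    (hmM : m < M) : geomInterp m M a b t ≤ linInterp m M a b t := by
  obtain ⟨hθ, hθ'⟩ := interp_weights_nonneg hmt htM
  have h := geom_mean_le_arith_mean2_weighted hθ hθ' ha.le hb.le (interp_weights_sum hmM)
  rwa [rpow_def_of_pos ha, rpow_def_of_pos hb, ← exp_add, mul_comm (log a), mul_comm (log b)] at h

lemma rpow_le_geomInterp {s : ℝ} (hm : 0 < m) (hmt : m ≤ t) (htM : t ≤ M) (hmM : m < M)
    (hs : s ≤ 0) : t ^ s ≤ geomInterp m M (m ^ s) (M ^ s) t := by
  obtain ⟨hθ, hθ'⟩ := interp_weights_nonneg hmt htM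
  have hlog := strictConcaveOn_log_Ioi.concaveOn.2 (Set.mem_Ioi.2 hm)
    (Set.mem_Ioi.2 (hm.trans hmM)) hθ hθ' (interp_weights_sum hmM)
  have hconv : (M - t) / (M - m) * m + (t - m) / (M - m) * M = t := by
    field_simp [(sub_pos.2 hmM).ne']
    ring
  simp only [smul_eq_mul, hconv] at hlog
  rw [geomInterp, rpow_def_of_pos (hm.trans_le hmt), log_rpow hm, log_rpow (hm.trans hmM)]
  refine exp_le_exp.2 ?_
  nlinarith [mul_le_mul_of_nonpos_left hlog hs]

lemma rpow_le_rpow_neg_mul_geomInterp {p r : ℝ} (hm : 0 < m) (hmM : m < M) (hp : p ≤ 0)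
    (hr0 : r ≤ 0) (ht : t ∈ Set.Icc m M) :
    t ^ p ≤ t ^ (-r) * geomInterp m M (m ^ (p + r)) (M ^ (p + r)) t := by
  calc t ^ p = t ^ (-r) * t ^ (p + r) := by rw [← rpow_add (hm.trans_le ht.1)]; ring_nf
    _ ≤ _ := mul_le_mul_of_nonneg_left (rpow_le_geomInterp hm ht.1 ht.2 hmM (add_nonpos hp hr0))
      (rpow_nonneg (hm.le.trans ht.1) _)

lemma rpow_mul_geomInterp_le_rpow_mul_linInterp {q s : ℝ} (hm : 0 < m) (hmM : m < M)
    (ht : t ∈ Set.Icc m M) :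
    t ^ q * geomInterp m M (m ^ s) (M ^ s) t ≤ t ^ q * linInterp m M (m ^ s) (M ^ s) t :=
  mul_le_mul_of_nonneg_left (geomInterp_le_linInterp (rpow_pos_of_pos hm _)
    (rpow_pos_of_pos (hm.trans hmM) _) ht.1 ht.2 hmM) (rpow_nonneg (hm.le.trans ht.1) _)

end Interpolation

lemma rpow_mul_one_add_le_one_add_mul_log {x p δ : ℝ} (hx : 0 < x) (hp : p ≤ 0)
    (hδ0 : 0 ≤ δ) (hδ1 : δ ≤ 1) : x ^ δ * (1 + (p - δ) * (x - 1)) ≤ 1 + p * log x := by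
  have hbern : x ^ δ ≤ 1 + δ * (x - 1) := by
    simpa using rpow_one_add_le_one_add_mul_self (by linarith : -1 ≤ x - 1) hδ0 hδ1
  have hsign : 0 ≤ (x - 1) * (x ^ δ - 1) := by
    rcases le_or_gt 1 x with h | h
    · exact mul_nonneg (by linarith) (by linarith [one_le_rpow h hδ0])
    · exact mul_nonneg_of_nonpos_of_nonpos (by linarith)
        (by linarith [rpow_le_one hx.le h.le hδ0])
  nlinarith [log_le_sub_one_of_pos hx, rpow_pos_of_pos hx δ,
    mul_nonneg (by linarith : 0 ≤ δ - p) hsign]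

lemma one_add_mul_log_le_rpow {x : ℝ} (hx : 0 < x) (p : ℝ) : 1 + p * log x ≤ x ^ p := by
  rw [rpow_def_of_pos hx, mul_comm]
  linarith [add_one_le_exp (log x * p)]

noncomputable def kantorovichConst (m M s : ℝ) : ℝ :=
  (m * M ^ s - M * m ^ s) / ((s - 1) * (M - m)) *
    (((s - 1) / s) * (M ^ s - m ^ s) / (m * M ^ s - M * m ^ s)) ^ s

/-- For `s < 0`, `kantorovichConst m M s` is the maximum over `t > 0` of
`linInterp m M (m ^ s) (M ^ s) t / t ^ s`, attained at `t = kantorovichPoint m M s`. -/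
noncomputable def kantorovichPoint (m M s : ℝ) : ℝ :=
  s * (M * m ^ s - m * M ^ s) / ((1 - s) * (M ^ s - m ^ s))

section Kantorovich

variable {m M s : ℝ}

lemma kantorovich_numerator_pos (hm : 0 < m) (hmM : m < M) (hs : s < 0) :
    0 < M * m ^ s - m * M ^ s := by
  have := rpow_lt_rpow_of_neg hm hmM hs
  nlinarith [rpow_pos_of_pos (hm.trans hmM) s]

lemma kantorovichPoint_pos (hm : 0 < m) (hmM : m < M) (hs : s < 0) :
    0 < kantorovichPoint m M s :=
  div_pos_of_neg_of_neg (mul_neg_of_neg_of_pos hs (kantorovich_numerator_pos hm hmM hs))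
    (mul_neg_of_pos_of_neg (by linarith) (sub_neg.2 (rpow_lt_rpow_of_neg hm hmM hs)))

lemma kantorovichConst_mul_rpow_kantorovichPoint (hm : 0 < m) (hmM : m < M) (hs : s < 0) :
    kantorovichConst m M s * kantorovichPoint m M s ^ s =
      (M * m ^ s - m * M ^ s) / ((1 - s) * (M - m)) := by
  have ht₀ := kantorovichPoint_pos hm hmM hs
  have hbase : (s - 1) / s * (M ^ s - m ^ s) / (m * M ^ s - M * m ^ s) =
      (kantorovichPoint m M s)⁻¹ := by
    have := (kantorovich_numerator_pos hm hmM hs).ne'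
    have := (sub_neg.2 (rpow_lt_rpow_of_neg hm hmM hs)).ne
    have := hs.ne
    have : 1 - s ≠ 0 := by linarith
    rw [kantorovichPoint, inv_div, show m * M ^ s - M * m ^ s = -(M * m ^ s - m * M ^ s) by ring]
    field_simp
    ring
  rw [kantorovichConst, hbase, mul_assoc, ← mul_rpow (inv_pos.2 ht₀).le ht₀.le,
    inv_mul_cancel₀ ht₀.ne', one_rpow, mul_one, ← neg_div_neg_eq]
  ring

lemma kantorovichConst_pos (hm : 0 < m) (hmM : m < M) (hs : s < 0) :
    0 < kantorovichConst m M s := by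
  have h := kantorovichConst_mul_rpow_kantorovichPoint hm hmM hs
  have : 0 < (M * m ^ s - m * M ^ s) / ((1 - s) * (M - m)) :=
    div_pos (kantorovich_numerator_pos hm hmM hs) (mul_pos (by linarith) (by linarith))
  exact pos_of_mul_pos_left (h ▸ this) (rpow_pos_of_pos (kantorovichPoint_pos hm hmM hs) _).le

lemma kantorovichConst_zero (hmM : m ≠ M) : kantorovichConst m M 0 = 1 := by
  rw [kantorovichConst, rpow_zero, rpow_zero, rpow_zero, mul_one, mul_one, mul_one,
    div_eq_one_iff_eq (mul_ne_zero (by norm_num) (sub_ne_zero.2 hmM.symm))]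
  ring

lemma linInterp_rpow_eq (hm : 0 < m) (hmM : m < M) (hs : s < 0) (x : ℝ) :
    linInterp m M (m ^ s) (M ^ s) x =
      kantorovichConst m M s * kantorovichPoint m M s ^ s *
        (1 + s * (x / kantorovichPoint m M s - 1)) := by
  have := (kantorovich_numerator_pos hm hmM hs).ne'
  have := (sub_neg.2 (rpow_lt_rpow_of_neg hm hmM hs)).ne
  have := (sub_pos.2 hmM).ne'
  have := hs.ne
  have : 1 - s ≠ 0 := by linarith
  rw [kantorovichConst_mul_rpow_kantorovichPoint hm hmM hs, linInterp, kantorovichPoint]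
  field_simp
  ring

end Kantorovich

theorem exists_log_affine_between {m M p r : ℝ} (hm : 0 < m) (hmM : m < M) (hp : p ≤ 0)
    (hr1 : -1 ≤ r) (hr0 : r ≤ 0) :
    ∃ c d : ℝ, d ≤ 0 ∧
      (∀ x, 0 < x →
        x ^ (-r) * linInterp m M (m ^ (p + r)) (M ^ (p + r)) x ≤ c + d * log x) ∧
      ∀ x, 0 < x → c + d * log x ≤ kantorovichConst m M (p + r) * x ^ p := by
  rcases (add_nonpos hp hr0).eq_or_lt with hs | hs
  · obtain ⟨rfl, rfl⟩ : p = 0 ∧ r = 0 := ⟨by linarith, by linarith⟩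
    refine ⟨1, 0, le_rfl, fun x _ => ?_, fun x _ => ?_⟩
    · simp [linInterp, interp_weights_sum hmM]
    · simp [kantorovichConst_zero hmM.ne]
  set K := kantorovichConst m M (p + r)
  set t₀ := kantorovichPoint m M (p + r)
  have ht₀ : 0 < t₀ := kantorovichPoint_pos hm hmM hs
  set k := K * t₀ ^ p
  have hk_split : k = K * t₀ ^ (p + r) * t₀ ^ (-r) := by
    rw [mul_assoc, ← rpow_add ht₀, add_neg_cancel_right]
  have hk : 0 ≤ k := (mul_pos (kantorovichConst_pos hm hmM hs) (rpow_pos_of_pos ht₀ p)).le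
  have hlog (x : ℝ) (hx : 0 < x) :
      k * (1 - p * log t₀) + k * p * log x = k * (1 + p * log (x / t₀)) := by
    rw [log_div hx.ne' ht₀.ne']
    ring
  refine ⟨k * (1 - p * log t₀), k * p, mul_nonpos_of_nonneg_of_nonpos hk hp,
    fun x hx => ?_, fun x hx => ?_⟩
  · calc x ^ (-r) * linInterp m M (m ^ (p + r)) (M ^ (p + r)) x
        = k * ((x / t₀) ^ (-r) * (1 + (p - -r) * (x / t₀ - 1))) := by
          have hlin : linInterp m M (m ^ (p + r)) (M ^ (p + r)) x =
              K * t₀ ^ (p + r) * (1 + (p + r) * (x / t₀ - 1)) := linInterp_rpow_eq hm hmM hs x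
          rw [hlin, div_rpow hx.le ht₀.le, hk_split, sub_neg_eq_add]
          field_simp
      _ ≤ k * (1 + p * log (x / t₀)) := by
          gcongr
          exact rpow_mul_one_add_le_one_add_mul_log (div_pos hx ht₀) hp (by linarith)
            (by linarith)
      _ = _ := (hlog x hx).symm
  · calc k * (1 - p * log t₀) + k * p * log x = k * (1 + p * log (x / t₀)) := hlog x hx
      _ ≤ k * (x / t₀) ^ p := by gcongr; exact one_add_mul_log_le_rpow (div_pos hx ht₀) p
      _ = K * x ^ p := by
          rw [div_rpow hx.le ht₀.le]
          simp only [k]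
          field_simp

section ChaoticOrder

variable {𝒜 : Type*} [CStarAlgebra 𝒜] [PartialOrder 𝒜] [StarOrderedRing 𝒜]

lemma cfc_const_add_mul_log_le_of_log_le {a b : 𝒜} (ha : IsStrictlyPositive a)
    (hb : IsStrictlyPositive b) (hab : CFC.log a ≤ CFC.log b) (c : ℝ) {d : ℝ} (hd : d ≤ 0) :
    cfc (fun x => c + d * log x) b ≤ cfc (fun x => c + d * log x) a := by
  have hla : ContinuousOn log (spectrum ℝ a) := by fun_prop (disch := grind)
  have hlb : ContinuousOn log (spectrum ℝ b) := by fun_prop (disch := grind)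
  rw [cfc_const_add c _ b, cfc_const_mul d log b, cfc_const_add c _ a, cfc_const_mul d log a]
  exact add_le_add le_rfl (smul_le_smul_of_nonpos_left hab hd)

end ChaoticOrder

theorem stmt_11_general {H : Type*} [NormedAddCommGroup H] [InnerProductSpace ℂ H] [CompleteSpace H]
    (A B : H →L[ℂ] H) (hA0 : 0 ≤ A) (hAu : IsUnit A)
    (m M : ℝ) (hm : 0 < m) (hmM : m < M)
    (hmB : m • (1 : H →L[ℂ] H) ≤ B) (hBM : B ≤ M • (1 : H →L[ℂ] H))
    (hchaos : cfc Real.log A ≤ cfc Real.log B)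
    (p r : ℝ) (hp : p ≤ 0) (hr1 : -1 ≤ r) (hr0 : r ≤ 0) (K : ℝ)
    (hK : K = (m * M ^ (p + r) - M * m ^ (p + r)) / (((p + r) - 1) * (M - m)) *
      ((((p + r) - 1) / (p + r)) * (M ^ (p + r) - m ^ (p + r)) /
        (m * M ^ (p + r) - M * m ^ (p + r))) ^ (p + r)) :
    cfc (fun t : ℝ => t ^ p) B ≤
      cfc (fun t : ℝ => t ^ (-r)) B *
        cfc (fun t : ℝ => Real.exp (((M - t) / (M - m)) * Real.log (m ^ (p + r)) +
          ((t - m) / (M - m)) * Real.log (M ^ (p + r)))) B ∧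
    cfc (fun t : ℝ => t ^ (-r)) B *
        cfc (fun t : ℝ => Real.exp (((M - t) / (M - m)) * Real.log (m ^ (p + r)) +
          ((t - m) / (M - m)) * Real.log (M ^ (p + r)))) B ≤
      K • cfc (fun t : ℝ => t ^ p) A := by
  have hA : IsStrictlyPositive A := hAu.isStrictlyPositive hA0
  have hmB' : algebraMap ℝ (H →L[ℂ] H) m ≤ B := by rwa [Algebra.algebraMap_eq_smul_one]
  have hBM' : B ≤ algebraMap ℝ (H →L[ℂ] H) M := by rwa [Algebra.algebraMap_eq_smul_one]
  have hB : IsStrictlyPositive B := (isStrictlyPositive_algebraMap hm).of_le hmB'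
  have hspec (x : ℝ) (hx : x ∈ spectrum ℝ B) : x ∈ Set.Icc m M :=
    ⟨(algebraMap_le_iff_le_spectrum hB.isSelfAdjoint).1 hmB' x hx,
      (le_algebraMap_iff_spectrum_le hB.isSelfAdjoint).1 hBM' x hx⟩
  have hcont {a : H →L[ℂ] H} (ha : IsStrictlyPositive a) (q : ℝ) :
      ContinuousOn (fun t : ℝ => t ^ q) (spectrum ℝ a) := by
    fun_prop (disch := grind)
  obtain ⟨c, d, hd, hlin_le, hle_K⟩ := exists_log_affine_between hm hmM hp hr1 hr0
  set E := geomInterp m M (m ^ (p + r)) (M ^ (p + r))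
  change cfc _ B ≤ cfc _ B * cfc E B ∧ cfc _ B * cfc E B ≤ _
  have hE : ContinuousOn E (spectrum ℝ B) := by unfold E geomInterp; fun_prop
  rw [← cfc_mul _ E B (hcont hB (-r)) hE]
  refine ⟨cfc_mono (fun x hx => rpow_le_rpow_neg_mul_geomInterp hm hmM hp hr0 (hspec x hx))
    (hcont hB p), ?_⟩
  calc cfc (fun x => x ^ (-r) * E x) B ≤ cfc (fun x => c + d * log x) B :=
        cfc_mono (fun x hx => (rpow_mul_geomInterp_le_rpow_mul_linInterp hm hmM (hspec x hx)).trans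
          (hlin_le x (hm.trans_le (hspec x hx).1)))
          ((hcont hB (-r)).mul hE) (by fun_prop (disch := grind))
    _ ≤ cfc (fun x => c + d * log x) A := cfc_const_add_mul_log_le_of_log_le hA hB hchaos c hd
    _ ≤ cfc (fun x => K * x ^ p) A :=
        cfc_mono (fun x hx => hK ▸ hle_K x (hA.spectrum_pos hx))
          (by fun_prop (disch := grind)) (by fun_prop (disch := grind))
    _ = K • cfc (fun x => x ^ p) A := cfc_const_mul K _ A (hcont hA p)

/-- Kantorovich-type inequality under the chaotic order (ratio type). -/
theorem stmt_11 {H : Type*} [NormedAddCommGroup H] [InnerProductSpace ℂ H] [CompleteSpace H]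
    (A B : H →L[ℂ] H) (hA0 : 0 ≤ A) (hAu : IsUnit A) (hB0 : 0 ≤ B) (hBu : IsUnit B)
    (m M : ℝ) (hm : 0 < m) (hmM : m < M)
    (hmB : m • (1 : H →L[ℂ] H) ≤ B) (hBM : B ≤ M • (1 : H →L[ℂ] H))
    (hchaos : cfc Real.log A ≤ cfc Real.log B)
    (p r : ℝ) (hp : p ≤ 0) (hr1 : -1 ≤ r) (hr0 : r ≤ 0) (K : ℝ)
    (hK : K = (m * M ^ (p + r) - M * m ^ (p + r)) / (((p + r) - 1) * (M - m)) *
      ((((p + r) - 1) / (p + r)) * (M ^ (p + r) - m ^ (p + r)) /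
        (m * M ^ (p + r) - M * m ^ (p + r))) ^ (p + r)) :
    cfc (fun t : ℝ => t ^ p) B ≤
      cfc (fun t : ℝ => t ^ (-r)) B *
        cfc (fun t : ℝ => Real.exp (((M - t) / (M - m)) * Real.log (m ^ (p + r)) +
          ((t - m) / (M - m)) * Real.log (M ^ (p + r)))) B ∧
    cfc (fun t : ℝ => t ^ (-r)) B *
        cfc (fun t : ℝ => Real.exp (((M - t) / (M - m)) * Real.log (m ^ (p + r)) +
          ((t - m) / (M - m)) * Real.log (M ^ (p + r)))) B ≤
      K • cfc (fun t : ℝ => t ^ p) A :=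
  stmt_11_general A B hA0 hAu m M hm hmM hmB hBM hchaos p r hp hr1 hr0 K hK
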